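/- Let h : St(r,n,ℂ) → ℝ be twice continuously differentiable and scale invariant, i.e. h(UR) = h(U) for every diagonal unitary matrix R ∈ DU_r. If U is a stationary point of h (grad h(U) = 0), then for each 1 ≤ p ≤ r the tangent vector Z_p = i·U e_p e_p^T satisfies Hess h(U)[Z_p] = 0. Consequently rank(Hess h(U)) ≤ 2nr − r² − r. -/

import Mathlib

/-!
Scale invariance makes the Euclidean gradient equivariant: differentiating `h (W * R) = h W`
gives `g (W * R) = g W * R` for every diagonal unitary `R`. Differentiating this once more,
along the phase curve `R t = diag (1, …, e^{it}, …, 1)` (phase in slot `p`), gives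
`Dg(U)[U X] = g(U) X` for the skew-Hermitian `X = i e_p e_pᵀ`. At a stationary point
`g U = U S` with `S = sym(Uᴴ g U)` Hermitian, and the Hessian formula at `Z_p = U X` collapses
to `U (S X - X S) - U (S X - X S) = 0`.

The `Z_p` are `r` independent tangent vectors in the kernel. The tangent space is the kernel of
`Z ↦ Uᴴ Z + Zᴴ U`, which maps `U H` to `H + Hᴴ` and so hits the `r²`-dimensional real space of
Hermitian matrices; hence the tangent space has dimension at most `2nr - r²`.
-/

open Matrix

noncomputable section

/-- Hermitian part `sym(A) = (A + Aᴴ)/2`. -/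
def symPart {r : ℕ} (A : Matrix (Fin r) (Fin r) ℂ) : Matrix (Fin r) (Fin r) ℂ :=
  (1 / 2 : ℂ) • (A + Aᴴ)

/-- Projection onto the tangent space of the Stiefel manifold at `U`. -/
def stiefelProj {n r : ℕ} (U Z : Matrix (Fin n) (Fin r) ℂ) : Matrix (Fin n) (Fin r) ℂ :=
  Z - U * symPart (Uᴴ * Z)

/-- Weingarten operator of the Stiefel manifold. -/
def weingarten {n r : ℕ} (U Z V : Matrix (Fin n) (Fin r) ℂ) : Matrix (Fin n) (Fin r) ℂ :=
  -(Z * (Uᴴ * V)) - U * symPart (Zᴴ * V)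

/-- The tangent space to the Stiefel manifold at `U`, as a real submodule of
`ℂ^{n×r}`. -/
def stiefelTangent {n r : ℕ} (U : Matrix (Fin n) (Fin r) ℂ) :
    Submodule ℝ (Matrix (Fin n) (Fin r) ℂ) where
  carrier := {Z | Uᴴ * Z + Zᴴ * U = 0}
  zero_mem' := by simp
  add_mem' := by
    intro a b ha hb
    simp only [Set.mem_setOf_eq] at ha hb ⊢
    have : Uᴴ * (a + b) + (a + b)ᴴ * U = (Uᴴ * a + aᴴ * U) + (Uᴴ * b + bᴴ * U) := by
      rw [Matrix.conjTranspose_add, Matrix.mul_add, Matrix.add_mul]; abel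
    rw [this, ha, hb, add_zero]
  smul_mem' := by
    intro c Z hZ
    simp only [Set.mem_setOf_eq] at hZ ⊢
    have : Uᴴ * (c • Z) + (c • Z)ᴴ * U = c • (Uᴴ * Z + Zᴴ * U) := by
      rw [Matrix.conjTranspose_smul, star_trivial, Matrix.mul_smul, Matrix.smul_mul, smul_add]
    rw [this, hZ, smul_zero]

attribute [local instance] Matrix.frobeniusNormedAddCommGroup Matrix.frobeniusNormedSpace

namespace Matrix

section Gradient

variable {m k : Type*} [Fintype m] [Fintype k]

theorem eq_of_forall_re_trace_conjTranspose_mul_eq {A B : Matrix m k ℂ}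
    (hAB : ∀ Z : Matrix m k ℂ, (Aᴴ * Z).trace.re = (Bᴴ * Z).trace.re) : A = B := by
  have htrace : ∀ Z : Matrix m k ℂ, (Aᴴ * Z).trace = (Bᴴ * Z).trace := fun Z ↦ by
    have him := hAB (Complex.I • Z)
    simp only [Matrix.mul_smul, trace_smul, smul_eq_mul, Complex.mul_re, Complex.I_re,
      Complex.I_im, zero_mul, one_mul, zero_sub, neg_inj] at him
    exact Complex.ext (hAB Z) him
  simpa using congrArg conjTranspose (ext_iff_trace_mul_right.mpr htrace)

variable [DecidableEq k]

def mulRightCLEOfMemUnitary {R : Matrix k k ℂ} (hR : R ∈ unitaryGroup k ℂ) :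
    Matrix m k ℂ ≃L[ℝ] Matrix m k ℂ :=
  LinearEquiv.toContinuousLinearEquiv
    { mulRightLinearMap m ℝ R with
      invFun := (· * star R)
      left_inv := fun A ↦ by simp [Matrix.mul_assoc, mem_unitaryGroup_iff.mp hR]
      right_inv := fun A ↦ by simp [Matrix.mul_assoc, mem_unitaryGroup_iff'.mp hR] }

theorem gradient_mul_of_mem_unitaryGroup {h : Matrix m k ℂ → ℝ} {g : Matrix m k ℂ → Matrix m k ℂ}
    (hg : ∀ W Z, fderiv ℝ h W Z = ((g W)ᴴ * Z).trace.re) {R : Matrix k k ℂ}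
    (hRu : R ∈ unitaryGroup k ℂ) (hR : ∀ W, h (W * R) = h W) (W : Matrix m k ℂ) :
    g (W * R) = g W * R := by
  let e : Matrix m k ℂ ≃L[ℝ] Matrix m k ℂ := mulRightCLEOfMemUnitary hRu
  have hfd : ∀ Z, fderiv ℝ h W Z = fderiv ℝ h (W * R) (Z * R) := fun Z ↦ by
    conv_lhs => rw [← show h ∘ e = h from funext hR]
    exact congrArg (· Z) (e.comp_right_fderiv (f := h) (x := W))
  have : g W = g (W * R) * Rᴴ := by
    refine eq_of_forall_re_trace_conjTranspose_mul_eq fun Z ↦ ?_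
    rw [← hg, hfd, hg, conjTranspose_mul,
      conjTranspose_conjTranspose, ← Matrix.mul_assoc, trace_mul_cycle]
  rw [this, Matrix.mul_assoc, ← star_eq_conjTranspose, mem_unitaryGroup_iff'.mp hRu,
    Matrix.mul_one]

theorem fderiv_apply_mul_eq_of_forall_apply_mul_eq {g : Matrix m k ℂ → Matrix m k ℂ}
    {U : Matrix m k ℂ} (hg : DifferentiableAt ℝ g U) {c : ℝ → Matrix k k ℂ}
    {c' : Matrix k k ℂ} (hc : HasDerivAt c c' 0) (hc₀ : c 0 = 1)
    (hgc : ∀ t, g (U * c t) = g U * c t) :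
    fderiv ℝ g U (U * c') = g U * c' := by
  have hUc : HasDerivAt (fun t ↦ U * c t) (U * c') 0 :=
    (mulLeftLinearMap k ℝ U).toContinuousLinearMap.hasFDerivAt.comp_hasDerivAt 0 hc
  have hgU : HasFDerivAt g (fderiv ℝ g U) (U * c 0) := by
    rw [hc₀, Matrix.mul_one]; exact hg.hasFDerivAt
  have hgcU : HasDerivAt (fun t ↦ g U * c t) (g U * c') 0 :=
    (mulLeftLinearMap k ℝ (g U)).toContinuousLinearMap.hasFDerivAt.comp_hasDerivAt 0 hc
  have hgUc := hgU.comp_hasDerivAt 0 hUc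
  rw [show g ∘ (fun t ↦ U * c t) = fun t ↦ g U * c t from funext hgc] at hgUc
  exact hgUc.unique hgcU

end Gradient

section Phase

variable {k : Type*} [DecidableEq k]

def colPhase (p : k) (z : ℂ) : Matrix k k ℂ :=
  1 + (z - 1) • single p p 1

theorem colPhase_apply_of_ne {p i j : k} (z : ℂ) (hij : i ≠ j) : colPhase p z i j = 0 := by
  simp only [colPhase, add_apply, one_apply_ne hij, smul_apply, single_apply, smul_eq_mul]
  grind

theorem norm_colPhase_apply_self {z : ℂ} (hz : ‖z‖ = 1) (p i : k) : ‖colPhase p z i i‖ = 1 := by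
  by_cases hip : i = p
  · subst hip; simpa [colPhase] using hz
  · simp [colPhase, Ne.symm hip]

theorem colPhase_mem_unitaryGroup [Fintype k] {z : ℂ} (hz : ‖z‖ = 1) (p : k) :
    colPhase p z ∈ unitaryGroup k ℂ := by
  have hcoef : star (z - 1) + (z - 1) + star (z - 1) * (z - 1) = 0 := by
    have : star z * z = 1 := by
      rw [Complex.star_def, ← Complex.normSq_eq_conj_mul_self, Complex.normSq_eq_norm_sq, hz]
      norm_num
    rw [star_sub, star_one]
    linear_combination this
  rw [mem_unitaryGroup_iff', star_eq_conjTranspose]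
  calc (colPhase p z)ᴴ * colPhase p z
      = 1 + (star (z - 1) + (z - 1) + star (z - 1) * (z - 1)) • single p p (1 : ℂ) := by
        simp only [colPhase, conjTranspose_add, conjTranspose_one, conjTranspose_smul,
          conjTranspose_single, star_one, Matrix.add_mul, Matrix.mul_add, Matrix.one_mul,
          Matrix.smul_mul, Matrix.mul_smul, single_mul_single_same, mul_one]
        module
    _ = 1 := by rw [hcoef, zero_smul, add_zero]

@[simp]
theorem colPhase_one (p : k) : colPhase p 1 = 1 := by
  simp [colPhase]

theorem hasDerivAt_colPhase_exp [Fintype k] (p : k) :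
    HasDerivAt (fun t : ℝ ↦ colPhase p (Complex.exp (t * Complex.I)))
      (Complex.I • single p p (1 : ℂ)) 0 := by
  have hexp : HasDerivAt (fun t : ℝ ↦ Complex.exp (t * Complex.I) - 1) Complex.I 0 := by
    simpa using ((Complex.ofRealCLM.hasDerivAt (x := 0)).mul_const Complex.I).cexp.sub_const 1
  exact (hexp.smul_const _).const_add (1 : Matrix k k ℂ)

end Phase

variable {k : Type*}

def addConjTranspose : Matrix k k ℂ →ₗ[ℝ] Matrix k k ℂ where
  toFun H := H + Hᴴ
  map_add' A B := by rw [conjTranspose_add]; abel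
  map_smul' c H := by simp [conjTranspose_smul, smul_add]

def smulIEquiv : Matrix k k ℂ ≃ₗ[ℝ] Matrix k k ℂ :=
  (LinearEquiv.smulOfNeZero ℂ _ Complex.I Complex.I_ne_zero).restrictScalars ℝ

theorem map_smulIEquiv_ker_addConjTranspose :
    (LinearMap.ker (addConjTranspose (k := k))).map smulIEquiv.toLinearMap =
      LinearMap.range addConjTranspose := by
  ext Y
  simp only [Submodule.mem_map, LinearMap.mem_ker, LinearMap.mem_range, addConjTranspose,
    smulIEquiv, LinearMap.coe_mk, AddHom.coe_mk, LinearEquiv.coe_coe,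
    LinearEquiv.restrictScalars_apply, LinearEquiv.smulOfNeZero_apply]
  constructor
  · rintro ⟨X, hX, rfl⟩
    have hXskew : Xᴴ = -X := eq_neg_of_add_eq_zero_right hX
    refine ⟨(Complex.I / 2) • X, ?_⟩
    rw [conjTranspose_smul, hXskew, Complex.star_def, map_div₀, Complex.conj_I, map_ofNat]
    module
  · rintro ⟨H, rfl⟩
    refine ⟨-Complex.I • (H + Hᴴ), ?_, ?_⟩
    · rw [conjTranspose_smul, conjTranspose_add, conjTranspose_conjTranspose, Complex.star_def,
        map_neg, Complex.conj_I]
      module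
    · rw [smul_smul]
      simp

theorem finrank_range_addConjTranspose [Fintype k] :
    Module.finrank ℝ (LinearMap.range (addConjTranspose (k := k))) = Fintype.card k ^ 2 := by
  -- multiplication by `i` carries the kernel (skew-Hermitian) onto the range (Hermitian),
  -- so rank and nullity agree and sum to `2 * card k ^ 2`
  have hker := smulIEquiv.finrank_map_eq (LinearMap.ker (addConjTranspose (k := k)))
  rw [map_smulIEquiv_ker_addConjTranspose] at hker
  have hsum := LinearMap.finrank_range_add_finrank_ker (addConjTranspose (k := k))
  rw [Module.finrank_matrix, Complex.finrank_real_complex] at hsum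
  nlinarith

end Matrix

theorem LinearMap.finrank_range_domRestrict_add_card_le {V W ι : Type*} [AddCommGroup V]
    [Module ℝ V] [FiniteDimensional ℝ V] [AddCommGroup W] [Module ℝ W] [Fintype ι]
    (f : V →ₗ[ℝ] W) (T : Submodule ℝ V) {v : ι → V} (hv : LinearIndependent ℝ v)
    (hvT : ∀ i, v i ∈ T) (hvf : ∀ i, f (v i) = 0) :
    Module.finrank ℝ (LinearMap.range (f.domRestrict T)) + Fintype.card ι ≤
      Module.finrank ℝ T := by
  let w : ι → LinearMap.ker (f.domRestrict T) := fun i ↦ ⟨⟨v i, hvT i⟩, hvf i⟩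
  have hw : LinearIndependent ℝ w :=
    LinearIndependent.of_comp (T.subtype ∘ₗ (LinearMap.ker (f.domRestrict T)).subtype) hv
  have := hw.fintype_card_le_finrank
  have := LinearMap.finrank_range_add_finrank_ker (f.domRestrict T)
  omega

section Stiefel

variable {n r : ℕ} {U : Matrix (Fin n) (Fin r) ℂ}

theorem isHermitian_symPart (A : Matrix (Fin r) (Fin r) ℂ) : (symPart A).IsHermitian := by
  rw [IsHermitian, symPart, conjTranspose_smul, conjTranspose_add, conjTranspose_conjTranspose,
    add_comm]
  simp

theorem stiefelProj_add_weingarten_eq_zero (hU : Uᴴ * U = 1) {S X : Matrix (Fin r) (Fin r) ℂ}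
    (hS : S.IsHermitian) (hX : Xᴴ = -X) :
    stiefelProj U (U * S * X) + weingarten U (U * X) (U * S) = 0 := by
  have hUU : ∀ Y : Matrix (Fin r) (Fin r) ℂ, Uᴴ * (U * Y) = Y := fun Y ↦ by
    rw [← Matrix.mul_assoc, hU, Matrix.one_mul]
  simp only [stiefelProj, weingarten, symPart, conjTranspose_mul, hS.eq, hX, Matrix.mul_assoc,
    hUU, Matrix.neg_mul, Matrix.mul_neg, Matrix.mul_add, Matrix.mul_smul, smul_add, smul_neg,
    conjTranspose_neg]
  module

theorem mul_mem_stiefelTangent (hU : Uᴴ * U = 1) {X : Matrix (Fin r) (Fin r) ℂ}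
    (hX : Xᴴ = -X) : U * X ∈ stiefelTangent U := by
  change Uᴴ * (U * X) + (U * X)ᴴ * U = 0
  rw [← Matrix.mul_assoc, hU, conjTranspose_mul, Matrix.mul_assoc, hU, hX]
  simp

def stiefelConstraint (U : Matrix (Fin n) (Fin r) ℂ) :
    Matrix (Fin n) (Fin r) ℂ →ₗ[ℝ] Matrix (Fin r) (Fin r) ℂ where
  toFun Z := Uᴴ * Z + Zᴴ * U
  map_add' A B := by rw [conjTranspose_add, Matrix.mul_add, Matrix.add_mul]; abel
  map_smul' c Z := by simp [conjTranspose_smul, smul_add]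

theorem ker_stiefelConstraint (U : Matrix (Fin n) (Fin r) ℂ) :
    LinearMap.ker (stiefelConstraint U) = stiefelTangent U := rfl

theorem stiefelConstraint_comp_mulLeft (hU : Uᴴ * U = 1) :
    stiefelConstraint U ∘ₗ mulLeftLinearMap (Fin r) ℝ U = addConjTranspose := by
  ext1 H
  change Uᴴ * (U * H) + (U * H)ᴴ * U = H + Hᴴ
  rw [← Matrix.mul_assoc, hU, conjTranspose_mul, Matrix.mul_assoc, hU, Matrix.one_mul,
    Matrix.mul_one]

theorem finrank_stiefelTangent_add_sq_le (hU : Uᴴ * U = 1) :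
    Module.finrank ℝ (stiefelTangent U) + r ^ 2 ≤ 2 * n * r := by
  have hrange : r ^ 2 ≤ Module.finrank ℝ (LinearMap.range (stiefelConstraint U)) := by
    have := Submodule.finrank_mono
      (LinearMap.range_comp_le_range (mulLeftLinearMap (Fin r) ℝ U) (stiefelConstraint U))
    rwa [stiefelConstraint_comp_mulLeft hU, finrank_range_addConjTranspose, Fintype.card_fin]
      at this
  have hsum := LinearMap.finrank_range_add_finrank_ker (stiefelConstraint U)
  rw [ker_stiefelConstraint, Module.finrank_matrix, Complex.finrank_real_complex] at hsum
  simp only [Fintype.card_fin] at hsum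
  linarith

theorem linearIndependent_mul_smul_I_single (hU : Uᴴ * U = 1) :
    LinearIndependent ℝ fun p : Fin r ↦ U * (Complex.I • single p p (1 : ℂ)) := by
  refine LinearIndependent.of_comp (mulLeftLinearMap (Fin r) ℝ Uᴴ) ?_
  simp only [Function.comp_def, mulLeftLinearMap_apply, ← Matrix.mul_assoc, hU, Matrix.one_mul]
  rw [Fintype.linearIndependent_iff]
  intro c hc p
  simpa [Matrix.sum_apply, single_apply] using congrFun (congrFun hc p) p

end Stiefel

theorem scale_invariant_hessian_degenerate_general (n r : ℕ)
    (h : Matrix (Fin n) (Fin r) ℂ → ℝ)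
    (g : Matrix (Fin n) (Fin r) ℂ → Matrix (Fin n) (Fin r) ℂ)
    (hg : ∀ U Z, fderiv ℝ h U Z = (((g U)ᴴ * Z).trace).re)
    (hgdiff : Differentiable ℝ g)
    (U : Matrix (Fin n) (Fin r) ℂ) (hU : Uᴴ * U = 1)
    (hinv : ∀ (W : Matrix (Fin n) (Fin r) ℂ) (R : Matrix (Fin r) (Fin r) ℂ),
      (∀ p q, p ≠ q → R p q = 0) → (∀ p, ‖R p p‖ = 1) → h (W * R) = h W)
    (hstat : g U - U * symPart (Uᴴ * g U) = 0)
    (𝓗 : Matrix (Fin n) (Fin r) ℂ →ₗ[ℝ] Matrix (Fin n) (Fin r) ℂ)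
    (h𝓗 : ∀ Z, 𝓗 Z =
      stiefelProj U (fderiv ℝ g U Z) + weingarten U Z (U * symPart (Uᴴ * g U))) :
    (∀ p : Fin r, 𝓗 (Complex.I • (U * Matrix.single p p (1 : ℂ))) = 0) ∧
      Module.finrank ℝ ↥(LinearMap.range (𝓗.domRestrict (stiefelTangent U))) ≤
        2 * n * r - r ^ 2 - r := by
  set S := symPart (Uᴴ * g U)
  have hgU : g U = U * S := sub_eq_zero.mp hstat
  have hskew (p : Fin r) : (Complex.I • single p p (1 : ℂ))ᴴ = -(Complex.I • single p p 1) := by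
    rw [conjTranspose_smul, conjTranspose_single, star_one, Complex.star_def, Complex.conj_I,
      neg_smul]
  have hkernel (p : Fin r) : 𝓗 (Complex.I • (U * single p p (1 : ℂ))) = 0 := by
    have hphase (t : ℝ) : g (U * colPhase p (Complex.exp (t * Complex.I))) =
        g U * colPhase p (Complex.exp (t * Complex.I)) := by
      have hz := Complex.norm_exp_ofReal_mul_I t
      refine gradient_mul_of_mem_unitaryGroup hg (colPhase_mem_unitaryGroup hz p) (fun W ↦ ?_) U
      exact hinv W _ (fun _ _ ↦ colPhase_apply_of_ne _) (norm_colPhase_apply_self hz p)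
    have hfd := fderiv_apply_mul_eq_of_forall_apply_mul_eq (hgdiff U) (hasDerivAt_colPhase_exp p)
      (by simp) hphase
    rw [← Matrix.mul_smul, h𝓗, hfd, hgU]
    exact stiefelProj_add_weingarten_eq_zero hU (isHermitian_symPart _) (hskew p)
  refine ⟨hkernel, ?_⟩
  have hrank := 𝓗.finrank_range_domRestrict_add_card_le (stiefelTangent U)
    (linearIndependent_mul_smul_I_single hU) (fun p ↦ mul_mem_stiefelTangent hU (hskew p))
    (fun p ↦ by rw [Matrix.mul_smul]; exact hkernel p)
  have hdim := finrank_stiefelTangent_add_sq_le hU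
  rw [Fintype.card_fin] at hrank
  omega

/-- If `h` is scale invariant (invariant under right multiplication by diagonal
unitary matrices) and `U` is a stationary point, then each tangent vector
`Z_p = i·U e_p e_pᵀ` lies in the kernel of the Riemannian Hessian
`𝓗[Z] = Proj_U(∇²h(U)[Z]) + A_U(Z, Proj⊥_U ∇h(U))`; consequently the rank of
the Hessian on the tangent space is at most `2nr − r² − r`. -/
theorem scale_invariant_hessian_degenerate (n r : ℕ)
    (h : Matrix (Fin n) (Fin r) ℂ → ℝ)
    (g : Matrix (Fin n) (Fin r) ℂ → Matrix (Fin n) (Fin r) ℂ)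
    (hsmooth : ContDiff ℝ 2 h)
    (hg : ∀ U Z, fderiv ℝ h U Z = (((g U)ᴴ * Z).trace).re)
    (hgdiff : Differentiable ℝ g)
    (U : Matrix (Fin n) (Fin r) ℂ) (hU : Uᴴ * U = 1)
    (hinv : ∀ (W : Matrix (Fin n) (Fin r) ℂ) (R : Matrix (Fin r) (Fin r) ℂ),
      (∀ p q, p ≠ q → R p q = 0) → (∀ p, ‖R p p‖ = 1) → h (W * R) = h W)
    (hstat : g U - U * symPart (Uᴴ * g U) = 0)
    (𝓗 : Matrix (Fin n) (Fin r) ℂ →ₗ[ℝ] Matrix (Fin n) (Fin r) ℂ)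
    (h𝓗 : ∀ Z, 𝓗 Z =
      stiefelProj U (fderiv ℝ g U Z) + weingarten U Z (U * symPart (Uᴴ * g U))) :
    (∀ p : Fin r, 𝓗 (Complex.I • (U * Matrix.single p p (1 : ℂ))) = 0) ∧
      Module.finrank ℝ ↥(LinearMap.range (𝓗.domRestrict (stiefelTangent U))) ≤
        2 * n * r - r ^ 2 - r :=
  scale_invariant_hessian_degenerate_general n r h g hg hgdiff U hU hinv hstat 𝓗 h𝓗

end
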